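/- arXiv:1102.1573 — 5 statements merged into one kernel-verified Lean document; each statement's English description precedes it below -/
import Mathlib

section
/- For a solution of ẍ + κẋ = 0 with initial data (x₀, ẋ₀), the quantity H(t) = ½ ẋ(t)² - ½ κ² x(t)² + κ² Λ x(t) (the Hamiltonian of the associated conservative system with Lagrangian L̂ = ½ẋ² + ½κ²x² - κ²Λx) is constant in time. -/
/-!
Along a solution of `ẍ + κẋ = 0` the quantity `ẋ + κx` is conserved; with `Λ = x₀ + ẋ₀/κ` it
equals `κΛ`. Hence `Ḣ = ẋ (ẍ - κ²x + κ²Λ) = -κẋ (ẋ + κx - κΛ) = 0`.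
-/

section DampedOscillator

variable {κ : ℝ} {x : ℝ → ℝ}

theorem deriv_add_mul_eq_of_deriv_deriv_add_mul_eq_zero (hx : Differentiable ℝ x)
    (hx' : Differentiable ℝ (deriv x)) (hode : ∀ t, deriv (deriv x) t + κ * deriv x t = 0)
    (t : ℝ) : deriv x t + κ * x t = deriv x 0 + κ * x 0 := by
  refine is_const_of_deriv_eq_zero (hx'.add (hx.const_mul κ)) (fun s => ?_) t 0
  rw [deriv_add (hx' s) ((hx s).const_mul κ), deriv_const_mul κ (hx s), hode s]

noncomputable def dampedHamiltonian (κ Λ : ℝ) (x : ℝ → ℝ) (t : ℝ) : ℝ :=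
  (1 / 2) * (deriv x t) ^ 2 - (1 / 2) * κ ^ 2 * (x t) ^ 2 + κ ^ 2 * Λ * x t

theorem hasDerivAt_dampedHamiltonian (Λ : ℝ) {t : ℝ} (hx : DifferentiableAt ℝ x t)
    (hx' : DifferentiableAt ℝ (deriv x) t) :
    HasDerivAt (dampedHamiltonian κ Λ x)
      (deriv x t * deriv (deriv x) t - κ ^ 2 * x t * deriv x t + κ ^ 2 * Λ * deriv x t) t := by
  have h := (((hx'.hasDerivAt.pow 2).const_mul (1 / 2 : ℝ)).sub
    ((hx.hasDerivAt.pow 2).const_mul ((1 / 2) * κ ^ 2))).add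
    (hx.hasDerivAt.const_mul (κ ^ 2 * Λ))
  exact h.congr_deriv (by norm_num; ring)

theorem dampedHamiltonian_eq_dampedHamiltonian_zero {Λ : ℝ} (hx : Differentiable ℝ x)
    (hx' : Differentiable ℝ (deriv x)) (hode : ∀ t, deriv (deriv x) t + κ * deriv x t = 0)
    (hΛ : ∀ t, deriv x t + κ * x t = κ * Λ) (t : ℝ) :
    dampedHamiltonian κ Λ x t = dampedHamiltonian κ Λ x 0 := by
  have hH := fun s => hasDerivAt_dampedHamiltonian (κ := κ) Λ (hx s) (hx' s)
  refine is_const_of_deriv_eq_zero (fun s => (hH s).differentiableAt) (fun s => ?_) t 0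
  rw [(hH s).deriv]
  linear_combination deriv x s * hode s - κ * deriv x s * hΛ s

end DampedOscillator

theorem stmt_3 (κ x₀ v₀ : ℝ) (hκ : κ ≠ 0) (x : ℝ → ℝ)
    (hx : Differentiable ℝ x) (hx' : Differentiable ℝ (deriv x))
    (hode : ∀ t, deriv (deriv x) t + κ * deriv x t = 0)
    (h0 : x 0 = x₀) (h0' : deriv x 0 = v₀) :
    ∀ t,
      (1 / 2) * (deriv x t) ^ 2 - (1 / 2) * κ ^ 2 * (x t) ^ 2
          + κ ^ 2 * (x₀ + v₀ / κ) * x t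
        = (1 / 2) * (deriv x 0) ^ 2 - (1 / 2) * κ ^ 2 * (x 0) ^ 2
          + κ ^ 2 * (x₀ + v₀ / κ) * x 0 := by
  have hΛ : ∀ t, deriv x t + κ * x t = κ * (x₀ + v₀ / κ) := fun t => by
    rw [deriv_add_mul_eq_of_deriv_deriv_add_mul_eq_zero hx hx' hode t, h0, h0']
    field_simp
    ring
  exact dampedHamiltonian_eq_dampedHamiltonian_zero hx hx' hode hΛ
end

section
/- If a₀, b₀ > 0 satisfy a₀ = b₀ cosh(κε) and the recursion a_k = a₀ - b₀²/(a₀ + a_{k-1}), b_k = b₀ b_{k-1}/(a₀ + a_{k-1}), a'_k = a_{k-1} - b_{k-1}²/(a₀ + a_{k-1}) holds, then a_k = a'_k for all k if and only if a_{k-1}² = b_{k-1}² + a₀² - b₀² for all k. -/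
theorem stmt_5 (κ ε : ℝ) (a b a' : ℕ → ℝ)
    (ha0 : 0 < a 0) (hb0 : 0 < b 0) (hcosh : a 0 = b 0 * Real.cosh (κ * ε))
    (hden : ∀ k, a 0 + a k ≠ 0)
    (hreca : ∀ k, a (k + 1) = a 0 - (b 0) ^ 2 / (a 0 + a k))
    (hrecb : ∀ k, b (k + 1) = b 0 * b k / (a 0 + a k))
    (hreca' : ∀ k, a' (k + 1) = a k - (b k) ^ 2 / (a 0 + a k)) :
    (∀ k, a (k + 1) = a' (k + 1)) ↔
      (∀ k, (a k) ^ 2 = (b k) ^ 2 + (a 0) ^ 2 - (b 0) ^ 2) := by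
  constructor
  · intro h k
    have h1 := h k
    rw [hreca k, hreca' k] at h1
    have hd := hden k
    field_simp at h1
    nlinarith [h1]
  · intro h k
    rw [hreca k, hreca' k]
    have hd := hden k
    have hk := h k
    field_simp
    nlinarith [hk]
end

section
/- With a₀ = (1/(2ε)) cosh(κε), b₀ = 1/(2ε), and the recursion b_k = b₀ b_{k-1}/(a₀ + a_{k-1}), a_{k-1} = √(b_{k-1}² + a₀² - b₀²), one has the closed form b_k = (1/(2ε)) · sinh(κε)/sinh((k+1)κε) for all k ≥ 0. -/
/-!
Put `c = 1/(2ε)` and `x = κε`. If `b_k = c sinh x / sinh y` with `y = (k+1)x`, then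
`cosh² y = 1 + sinh² y` turns the radicand into the perfect square `(c sinh x cosh y / sinh y)²`,
and the addition formula for `sinh` collapses the denominator of the recursion to
`c sinh (y + x) / sinh y`, which gives `b_{k+1} = c sinh x / sinh (y + x)`.
-/

open Real

lemma sqrt_sinh_div_sq_add_cosh_sq_sub {c x y : ℝ} (hc : 0 ≤ c) (hx : 0 < x) (hy : 0 < y) :
    √((c * sinh x / sinh y) ^ 2 + (c * cosh x) ^ 2 - c ^ 2)
      = c * sinh x * cosh y / sinh y := by
  have hsy : 0 < sinh y := sinh_pos_iff.2 hy
  have hsx : 0 < sinh x := sinh_pos_iff.2 hx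
  have hsq : (c * sinh x / sinh y) ^ 2 + (c * cosh x) ^ 2 - c ^ 2
      = (c * sinh x * cosh y / sinh y) ^ 2 := by
    field_simp
    linear_combination c ^ 2 * sinh y ^ 2 * cosh_sq x - c ^ 2 * sinh x ^ 2 * cosh_sq y
  rw [hsq, sqrt_sq (by positivity)]

lemma mul_sinh_div_div_cosh_add {c x y : ℝ} (hc : 0 < c) (hx : 0 < x) (hy : 0 < y) :
    c * (c * sinh x / sinh y) / (c * cosh x + c * sinh x * cosh y / sinh y)
      = c * sinh x / sinh (y + x) := by
  have hsy : 0 < sinh y := sinh_pos_iff.2 hy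
  have hsyx : 0 < sinh (y + x) := sinh_pos_iff.2 (by linarith)
  have hden : c * cosh x + c * sinh x * cosh y / sinh y = c * sinh (y + x) / sinh y := by
    rw [sinh_add]
    field_simp
  rw [hden]
  field_simp

theorem eq_sinh_div_sinh_of_rec {c x : ℝ} (hc : 0 < c) (hx : 0 < x) {b : ℕ → ℝ}
    (hb0 : b 0 = c)
    (hrec : ∀ k, b (k + 1) = c * b k / (c * cosh x + √(b k ^ 2 + (c * cosh x) ^ 2 - c ^ 2)))
    (k : ℕ) : b k = c * sinh x / sinh ((k + 1) * x) := by
  induction k with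
  | zero =>
    have hsx : 0 < sinh x := sinh_pos_iff.2 hx
    simp [hb0, hsx.ne']
  | succ k ih =>
    have hy : 0 < ((k : ℝ) + 1) * x := by positivity
    rw [hrec k, ih, sqrt_sinh_div_sq_add_cosh_sq_sub hc.le hx hy,
      mul_sinh_div_div_cosh_add hc hx hy]
    push_cast
    ring_nf

theorem stmt_7 (κ ε : ℝ) (hε : 0 < ε) (hκ : 0 < κ) (b : ℕ → ℝ)
    (hb0 : b 0 = 1 / (2 * ε))
    (hrec : ∀ k, b (k + 1) =
      (1 / (2 * ε)) * b k /
        (Real.cosh (κ * ε) / (2 * ε) +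
          Real.sqrt ((b k) ^ 2 + (Real.cosh (κ * ε) / (2 * ε)) ^ 2 - (1 / (2 * ε)) ^ 2))) :
    ∀ k : ℕ, b k = (1 / (2 * ε)) * Real.sinh (κ * ε) / Real.sinh ((k + 1) * κ * ε) := by
  have hcosh : cosh (κ * ε) / (2 * ε) = 1 / (2 * ε) * cosh (κ * ε) := by ring
  intro k
  rw [mul_assoc]
  refine eq_sinh_div_sinh_of_rec (by positivity) (by positivity) hb0 (fun k => ?_) k
  rw [hrec k, hcosh]
end

section
/- Under the same recursion with a₀ = cosh(κε)/(2ε), b₀ = 1/(2ε), the closed form a_k = (sinh(κε)/(2ε)) · cosh((k+1)κε)/sinh((k+1)κε) holds for all k ≥ 0. -/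
/-!
Since `cosh² t - 1 = sinh² t`, the radicand equals `(sinh t / (2ε))² (1 + 1 / sinh² y)`,
and `1 + 1 / sinh² y = coth² y`; for `t ≥ 0`, `y > 0` the square root is the nonnegative
number `(sinh t / (2ε)) coth y`.
-/

namespace Real

theorem cosh_div_sinh_sq {y : ℝ} (hy : sinh y ≠ 0) :
    (cosh y / sinh y) ^ 2 = 1 + (1 / sinh y) ^ 2 := by
  rw [div_pow, cosh_sq, add_div, div_self (pow_ne_zero 2 hy), div_pow, one_pow]

theorem sq_div_sinh_add_cosh_sq_sub_sq {ε t y : ℝ} (hy : sinh y ≠ 0) :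
    (1 / (2 * ε) * sinh t / sinh y) ^ 2 + (cosh t / (2 * ε)) ^ 2 - (1 / (2 * ε)) ^ 2
      = (sinh t / (2 * ε) * (cosh y / sinh y)) ^ 2 := by
  rw [mul_pow, cosh_div_sinh_sq hy, div_pow (cosh t), cosh_sq]
  ring

theorem sqrt_sq_div_sinh_add_cosh_sq_sub_sq {ε t y : ℝ} (hε : 0 < ε) (ht : 0 ≤ t)
    (hy : 0 < y) :
    √((1 / (2 * ε) * sinh t / sinh y) ^ 2 + (cosh t / (2 * ε)) ^ 2 - (1 / (2 * ε)) ^ 2)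
      = sinh t / (2 * ε) * (cosh y / sinh y) := by
  have hsinh_t : 0 ≤ sinh t := sinh_nonneg_iff.mpr ht
  have hsinh_y : 0 < sinh y := sinh_pos_iff.mpr hy
  rw [sq_div_sinh_add_cosh_sq_sub_sq hsinh_y.ne', sqrt_sq (by positivity)]

end Real

theorem stmt_8 (κ ε : ℝ) (hε : 0 < ε) (hκ : 0 < κ) :
    ∀ k : ℕ,
      Real.sqrt (((1 / (2 * ε)) * Real.sinh (κ * ε) / Real.sinh ((k + 1) * κ * ε)) ^ 2
          + (Real.cosh (κ * ε) / (2 * ε)) ^ 2 - (1 / (2 * ε)) ^ 2)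
        = (Real.sinh (κ * ε) / (2 * ε)) *
            (Real.cosh ((k + 1) * κ * ε) / Real.sinh ((k + 1) * κ * ε)) := fun k =>
  Real.sqrt_sq_div_sinh_add_cosh_sq_sub_sq hε (mul_pos hκ hε).le (by positivity)
end

section
/- As N → ∞ with ε = T/N, the limit of R_N given by the closed form R_N = (κ²Λε/2)[1 + (1/cosh κε)(Σ_{j=1}^{N} 2cosh(κε)sinh(jκε))/sinh((N+1)κε)] equals κΛ (e^{κT} - 1)/(e^{κT} + 1) = κΛ tanh(κT/2). -/
/-!
Put `x = κT / (2N)`, so that `ε = 2x / κ`. The sum telescopes,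
`(∑_{j=1}^N sinh (2jx)) · sinh x = sinh (Nx) · sinh ((N+1)x)`, and with `sinh 2y = 2 sinh y cosh y`
the closed form collapses to
`R_N = κΛx + κΛ · (x / sinh x) · sinh (κT/2) / cosh (κT/2 + x)`.
As `N → ∞`, `x → 0` and `x / sinh x → 1`, leaving `κΛ tanh (κT/2)`; finally
`tanh (y/2) = (eʸ - 1) / (eʸ + 1)`.
-/

open Filter Topology Finset Real

theorem sum_sinh_two_mul_mul_sinh (x : ℝ) (N : ℕ) :
    (∑ j ∈ Icc 1 N, sinh (2 * j * x)) * sinh x = sinh (N * x) * sinh ((N + 1) * x) := by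
  induction N with
  | zero => simp
  | succ N ih =>
    rw [sum_Icc_succ_top (by omega), add_mul, ih]
    push_cast
    have h₁ : (N : ℝ) * x = (N + 1) * x - x := by ring
    have h₂ : (N + 1 + 1 : ℝ) * x = (N + 1) * x + x := by ring
    have h₃ : 2 * ((N : ℝ) + 1) * x = 2 * ((N + 1) * x) := by ring
    rw [h₁, h₂, h₃, sinh_sub, sinh_add, sinh_two_mul]
    ring

theorem tendsto_div_sinh_nhdsNE_zero : Tendsto (fun x => x / sinh x) (𝓝[≠] 0) (𝓝 1) := by
  have h := hasDerivAt_iff_tendsto_slope.mp (hasDerivAt_sinh 0)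
  rw [cosh_zero] at h
  simpa [slope_def_field] using h.inv₀ one_ne_zero

theorem exp_sub_one_div_exp_add_one (y : ℝ) : (exp y - 1) / (exp y + 1) = tanh (y / 2) := by
  have h : exp y = exp (y / 2) ^ 2 := by rw [← exp_nat_mul]; ring_nf
  rw [tanh_eq, exp_neg, h]
  field_simp

/-- The paper's `R_N`, with `ε = T / N`. -/
noncomputable def R (κ T Λ : ℝ) (N : ℕ) : ℝ :=
  (κ ^ 2 * Λ * (T / N) / 2) *
    (1 + (1 / cosh (κ * (T / N))) *
      (∑ j ∈ Icc 1 N, 2 * cosh (κ * (T / N)) * sinh ((j : ℝ) * κ * (T / N))) /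
        sinh (((N : ℝ) + 1) * κ * (T / N)))

theorem R_eq {κ T x : ℝ} (Λ : ℝ) {N : ℕ} (hN : N ≠ 0) (hx : x ≠ 0) (hκT : κ * T / 2 = N * x) :
    R κ T Λ N = κ * Λ * x + κ * Λ * (x / sinh x) * (sinh (κ * T / 2) / cosh (κ * T / 2 + x)) := by
  have hε : κ * (T / N) = 2 * x := by
    field_simp [Nat.cast_ne_zero.mpr hN]; linarith
  have hNx : (N + 1 : ℝ) * x = κ * T / 2 + x := by rw [hκT]; ring
  have hsinh : sinh x ≠ 0 := sinh_ne_zero.mpr hx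
  have hsinh' : sinh (κ * T / 2 + x) ≠ 0 := by
    rw [← hNx]; exact sinh_ne_zero.mpr (mul_ne_zero (by positivity) hx)
  have hprefactor : κ ^ 2 * Λ * (T / N) / 2 = κ * Λ * x := by
    linear_combination κ * Λ / 2 * hε
  have hsum : ∑ j ∈ Icc 1 N, 2 * cosh (κ * (T / N)) * sinh ((j : ℝ) * κ * (T / N))
      = 2 * cosh (2 * x) * (sinh (κ * T / 2) * sinh (κ * T / 2 + x) / sinh x) := by
    rw [← hNx, hκT, ← sum_sinh_two_mul_mul_sinh, mul_div_cancel_right₀ _ hsinh, mul_sum]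
    refine sum_congr rfl fun j _ => ?_
    rw [mul_assoc (j : ℝ), hε]; congr 2; ring
  have hlast : ((N : ℝ) + 1) * κ * (T / N) = 2 * (κ * T / 2 + x) := by
    rw [mul_assoc, hε, ← hNx]; ring
  rw [R, hprefactor, hsum, hlast, hε, sinh_two_mul]
  have := (cosh_pos (2 * x)).ne'
  have := (cosh_pos (κ * T / 2 + x)).ne'
  -- otherwise `field_simp` normalises `κ * T / 2` inside `sinh` and `cosh` differently in each place
  generalize κ * T / 2 = a at *
  field_simp

theorem tendsto_R {κ T : ℝ} (Λ : ℝ) (hκT : κ * T ≠ 0) :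
    Tendsto (R κ T Λ) atTop (𝓝 (κ * Λ * tanh (κ * T / 2))) := by
  set a := κ * T / 2
  have ha : a ≠ 0 := div_ne_zero hκT two_ne_zero
  have hxN : Tendsto (fun N : ℕ => a / N) atTop (𝓝[≠] 0) := by
    refine tendsto_nhdsWithin_iff.mpr ⟨tendsto_const_div_atTop_nhds_zero_nat a, ?_⟩
    filter_upwards [eventually_ne_atTop 0] with N hN
    exact div_ne_zero ha (Nat.cast_ne_zero.mpr hN)
  have hf : Tendsto (fun x => κ * Λ * x + κ * Λ * (x / sinh x) * (sinh a / cosh (a + x)))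
      (𝓝[≠] 0) (𝓝 (κ * Λ * tanh a)) := by
    have hcont : Continuous fun x => sinh a / cosh (a + x) :=
      continuous_const.div (by fun_prop) fun x => (cosh_pos _).ne'
    have := (((continuous_const_mul (κ * Λ)).tendsto 0).mono_left nhdsWithin_le_nhds).add
      ((tendsto_div_sinh_nhdsNE_zero.const_mul (κ * Λ)).mul
        ((hcont.tendsto 0).mono_left nhdsWithin_le_nhds))
    simpa [tanh_eq_sinh_div_cosh] using this
  refine (hf.comp hxN).congr' ?_
  filter_upwards [eventually_ne_atTop 0] with N hN
  have hN' : (N : ℝ) ≠ 0 := Nat.cast_ne_zero.mpr hN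
  exact (R_eq Λ hN (div_ne_zero ha hN') (mul_div_cancel₀ a hN').symm).symm

theorem stmt_14 (κ T Λ : ℝ) (hκ : 0 < κ) (hT : 0 < T) :
    Tendsto (fun N : ℕ =>
        (κ ^ 2 * Λ * (T / N) / 2) *
          (1 + (1 / Real.cosh (κ * (T / N))) *
            (∑ j ∈ Finset.Icc 1 N,
                2 * Real.cosh (κ * (T / N)) * Real.sinh ((j : ℝ) * κ * (T / N))) /
              Real.sinh (((N : ℝ) + 1) * κ * (T / N))))
      atTop (nhds (κ * Λ * (Real.exp (κ * T) - 1) / (Real.exp (κ * T) + 1))) ∧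
    κ * Λ * (Real.exp (κ * T) - 1) / (Real.exp (κ * T) + 1) = κ * Λ * Real.tanh (κ * T / 2) := by
  have hlimit : κ * Λ * (exp (κ * T) - 1) / (exp (κ * T) + 1) = κ * Λ * tanh (κ * T / 2) := by
    rw [mul_div_assoc, exp_sub_one_div_exp_add_one]
  exact ⟨hlimit ▸ tendsto_R Λ (mul_pos hκ hT).ne', hlimit⟩
end
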